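/- arXiv:2305.02654 — 3 statements merged into one kernel-verified Lean document; each statement's English description precedes it below -/
import Mathlib

section
/- Let 𝔤₁,…,𝔤ₙ be real Lie algebras and 𝔤 = 𝔤₁ ⊕ ⋯ ⊕ 𝔤ₙ their direct product, with natural inclusions ιⱼ : 𝔤ⱼ → 𝔤 and projections πⱼ : 𝔤 → 𝔤ⱼ. If J : 𝔤 → 𝔤 is an integrable almost complex structure (J² = −id and N_J ≡ 0), then for every j with 1 ≤ j ≤ n the linear endomorphism Fⱼ = πⱼ ∘ J ∘ ιⱼ : 𝔤ⱼ → 𝔤ⱼ is torsion free, i.e. N_{Fⱼ} ≡ 0. -/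
open scoped DirectSum

namespace DirectSum

variable {ι : Type*} [DecidableEq ι] {L : ι → Type*} [∀ i, LieRing (L i)]

theorem lie_of_left (j : ι) (x : L j) (z : ⨁ i, L i) :
    ⁅of L j x, z⁆ = of L j ⁅x, z j⁆ := by
  ext i
  rw [bracket_apply]
  obtain rfl | h := eq_or_ne i j
  · simp only [of_eq_same]
  · rw [of_eq_of_ne _ _ _ h, of_eq_of_ne _ _ _ h, zero_lie]

theorem lie_of_right (j : ι) (y : L j) (z : ⨁ i, L i) :
    ⁅z, of L j y⁆ = of L j ⁅z j, y⁆ := by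
  ext i
  rw [bracket_apply]
  obtain rfl | h := eq_or_ne i j
  · simp only [of_eq_same]
  · rw [of_eq_of_ne _ _ _ h, of_eq_of_ne _ _ _ h, lie_zero]

end DirectSum

theorem statement4_general {n : ℕ} (L : Fin n → Type*)
    [∀ i, LieRing (L i)] [∀ i, LieAlgebra ℝ (L i)]
    (J : (⨁ i, L i) →ₗ[ℝ] ⨁ i, L i)
    (hint : ∀ X Y : ⨁ i, L i, ⁅J X, J Y⁆ - J ⁅X, J Y⁆ - J ⁅J X, Y⁆ - ⁅X, Y⁆ = 0)
    (j : Fin n) :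
    ∀ X Y : L j,
      ⁅J (DirectSum.of L j X) j, J (DirectSum.of L j Y) j⁆
        - J (DirectSum.of L j ⁅X, J (DirectSum.of L j Y) j⁆) j
        - J (DirectSum.of L j ⁅J (DirectSum.of L j X) j, Y⁆) j
        - ⁅X, Y⁆ = 0 := by
  intro X Y
  -- brackets with `of L j _` stay in the `j`-th summand, so the `j`-th component of
  -- `N_J (of L j X) (of L j Y)` is exactly the torsion of `F_j` at `(X, Y)`
  have h := congrArg (· j) (hint (DirectSum.of L j X) (DirectSum.of L j Y))
  simpa only [DirectSum.sub_apply, DirectSum.zero_apply, DirectSum.bracket_apply,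
    DirectSum.lie_of_left, DirectSum.lie_of_right, DirectSum.of_eq_same] using h

/-- If J is an integrable almost complex structure on a direct product of Lie algebras,
then the induced endomorphism F_j = π_j ∘ J ∘ ι_j on each summand is torsion free. -/
theorem statement4 {n : ℕ} (L : Fin n → Type*)
    [∀ i, LieRing (L i)] [∀ i, LieAlgebra ℝ (L i)]
    (J : (⨁ i, L i) →ₗ[ℝ] ⨁ i, L i)
    (hJ : ∀ X, J (J X) = -X)
    (hint : ∀ X Y : ⨁ i, L i, ⁅J X, J Y⁆ - J ⁅X, J Y⁆ - J ⁅J X, Y⁆ - ⁅X, Y⁆ = 0)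
    (j : Fin n) :
    ∀ X Y : L j,
      ⁅J (DirectSum.of L j X) j, J (DirectSum.of L j Y) j⁆
        - J (DirectSum.of L j ⁅X, J (DirectSum.of L j Y) j⁆) j
        - J (DirectSum.of L j ⁅J (DirectSum.of L j X) j, Y⁆) j
        - ⁅X, Y⁆ = 0 :=
  statement4_general L J hint j
end

section
/- Let sl(2,ℝ) be the 3-dimensional real Lie algebra with basis e₁,e₂,e₃ and brackets [e₁,e₂] = e₃, [e₁,e₃] = e₂, [e₂,e₃] = −e₁. For any real numbers A, B, C, λ, μ, τ, the linear endomorphism F of sl(2,ℝ) determined by F(e₁) = λe₁ + Ae₂ − Be₃, F(e₂) = Ae₁ + μe₂ − Ce₃, F(e₃) = Be₁ + Ce₂ + τe₃ is not torsion free; that is, there exist X, Y ∈ sl(2,ℝ) with N_F(X,Y) ≠ 0. -/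
/-!
Evaluating the torsion on the basis pairs `(e₀, e₁)`, `(e₀, e₂)`, `(e₁, e₂)` and reading off
coordinates gives polynomial equations in `A, B, C, λ, μ, τ`. Three of them force
`λτ = -1 - B²`, `μτ = -1 - C²` and `λμ = A² - 1`; in particular `τ ≠ 0` and
`λμ τ² = (1 + B²)(1 + C²) > 0`. The off-diagonal equations give `BC = 0` and then `Aτ = 0`,
so `A = 0` and `λμ = -1 < 0`, a contradiction.
-/

def LieAlgebra.torsion {R L : Type*} [CommRing R] [LieRing L] [LieAlgebra R L]
    (F : L →ₗ[R] L) (X Y : L) : L :=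
  ⁅F X, F Y⁆ - F ⁅X, F Y⁆ - F ⁅F X, Y⁆ - ⁅X, Y⁆

lemma LinearIndependent.eq_zero_of_fin_three {R M : Type*} [Ring R] [AddCommGroup M]
    [Module R M] {v : Fin 3 → M} (hv : LinearIndependent R v) {a b c : R}
    (h : a • v 0 + b • v 1 + c • v 2 = 0) : a = 0 ∧ b = 0 ∧ c = 0 := by
  have hzero := Fintype.linearIndependent_iff.mp hv ![a, b, c]
    (by simpa [Fin.sum_univ_three] using h)
  exact ⟨hzero 0, hzero 1, hzero 2⟩

lemma sl2_torsion_equations_inconsistent {K : Type*} [Field K] [LinearOrder K]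
    [IsStrictOrderedRing K] {A B C lam μ τ : K}
    (h01₀ : 2 * A * C - 2 * B * μ = 0) (h01₁ : 2 * A * B - 2 * C * lam = 0)
    (h01₂ : lam * μ - lam * τ - μ * τ - 1 - A ^ 2 - B ^ 2 - C ^ 2 = 0)
    (h02₀ : -2 * B * C - 2 * A * τ = 0)
    (h02₁ : lam * τ - lam * μ - μ * τ - 1 + A ^ 2 + B ^ 2 - C ^ 2 = 0)
    (h12₀ : lam * τ + lam * μ - μ * τ + 1 - A ^ 2 + B ^ 2 - C ^ 2 = 0) : False := by
  have hμτ : μ * τ = -1 - C ^ 2 := by linear_combination (-(h01₂ + h02₁)) / 2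
  have hlt : lam * τ = -1 - B ^ 2 := by linear_combination (h02₁ + h12₀) / 2 + hμτ
  have hlm : lam * μ = A ^ 2 - 1 := by linear_combination (h01₂ + h12₀) / 2 + hμτ
  have hBC : B * C = 0 := by
    linear_combination (A * B * h01₀ + B * μ * h01₁) / 2 + B * C * hlm
  have hAτ : A * τ = 0 := by linear_combination -h02₀ / 2 - hBC
  have hτ : τ ≠ 0 := by
    rintro rfl
    nlinarith [sq_nonneg B]
  have hA : A = 0 := (mul_eq_zero.mp hAτ).resolve_right hτ
  have hprod : lam * μ * τ ^ 2 = (1 + B ^ 2) * (1 + C ^ 2) := by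
    linear_combination μ * τ * hlt + (-1 - B ^ 2) * hμτ
  rw [hlm, hA] at hprod
  nlinarith [sq_nonneg τ, sq_nonneg B, sq_nonneg C, mul_nonneg (sq_nonneg B) (sq_nonneg C)]

lemma sl2_torsion_basis {R L : Type*} [CommRing R] [LieRing L] [LieAlgebra R L] {e : Fin 3 → L}
    (h01 : ⁅e 0, e 1⁆ = e 2) (h02 : ⁅e 0, e 2⁆ = e 1) (h12 : ⁅e 1, e 2⁆ = -e 0)
    {A B C lam μ τ : R} {F : L →ₗ[R] L}
    (hF0 : F (e 0) = lam • e 0 + A • e 1 - B • e 2)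
    (hF1 : F (e 1) = A • e 0 + μ • e 1 - C • e 2)
    (hF2 : F (e 2) = B • e 0 + C • e 1 + τ • e 2) :
    LieAlgebra.torsion F (e 0) (e 1) = (2 * A * C - 2 * B * μ) • e 0
      + (2 * A * B - 2 * C * lam) • e 1
      + (lam * μ - lam * τ - μ * τ - 1 - A ^ 2 - B ^ 2 - C ^ 2) • e 2 ∧
    LieAlgebra.torsion F (e 0) (e 2) = (-2 * B * C - 2 * A * τ) • e 0
      + (lam * τ - lam * μ - μ * τ - 1 + A ^ 2 + B ^ 2 - C ^ 2) • e 1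
      + (2 * C * lam - 2 * A * B) • e 2 ∧
    LieAlgebra.torsion F (e 1) (e 2)
      = (lam * τ + lam * μ - μ * τ + 1 - A ^ 2 + B ^ 2 - C ^ 2) • e 0
      + (2 * B * C + 2 * A * τ) • e 1
      + (2 * A * C - 2 * B * μ) • e 2 := by
  have h10 : ⁅e 1, e 0⁆ = -e 2 := by rw [← lie_skew, h01]
  have h20 : ⁅e 2, e 0⁆ = -e 1 := by rw [← lie_skew, h02]
  have h21 : ⁅e 2, e 1⁆ = e 0 := by rw [← lie_skew, h12, neg_neg]
  refine ⟨?_, ?_, ?_⟩ <;>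
  · simp only [LieAlgebra.torsion, hF0, hF1, hF2, lie_add, add_lie, lie_sub, sub_lie, lie_smul,
      smul_lie, lie_self, map_add, map_sub, map_neg, map_smul, map_zero, smul_neg,
      smul_zero, h01, h02, h12, h10, h20, h21]
    module

/-- No endomorphism of sl(2,ℝ) of the stated symmetric-type shape is torsion free. -/
theorem statement5 (g : Type*) [LieRing g] [LieAlgebra ℝ g]
    (e : Module.Basis (Fin 3) ℝ g)
    (h12 : ⁅e 0, e 1⁆ = e 2) (h13 : ⁅e 0, e 2⁆ = e 1) (h23 : ⁅e 1, e 2⁆ = -(e 0))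
    (A B C lam μ τ : ℝ) (F : g →ₗ[ℝ] g)
    (hF1 : F (e 0) = lam • e 0 + A • e 1 - B • e 2)
    (hF2 : F (e 1) = A • e 0 + μ • e 1 - C • e 2)
    (hF3 : F (e 2) = B • e 0 + C • e 1 + τ • e 2) :
    ∃ X Y : g, ⁅F X, F Y⁆ - F ⁅X, F Y⁆ - F ⁅F X, Y⁆ - ⁅X, Y⁆ ≠ 0 := by
  by_contra! htf
  obtain ⟨hN01, hN02, hN12⟩ := sl2_torsion_basis h12 h13 h23 hF1 hF2 hF3
  have hind := e.linearIndependent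
  obtain ⟨h01₀, h01₁, h01₂⟩ := hind.eq_zero_of_fin_three (hN01.symm.trans (htf (e 0) (e 1)))
  obtain ⟨h02₀, h02₁, -⟩ := hind.eq_zero_of_fin_three (hN02.symm.trans (htf (e 0) (e 2)))
  obtain ⟨h12₀, -, -⟩ := hind.eq_zero_of_fin_three (hN12.symm.trans (htf (e 1) (e 2)))
  exact sl2_torsion_equations_inconsistent h01₀ h01₁ h01₂ h02₀ h02₁ h12₀
end

section
/- Let so(3) be the 3-dimensional real Lie algebra with basis e₁,e₂,e₃ and brackets [e₁,e₂] = −e₃, [e₁,e₃] = e₂, [e₂,e₃] = −e₁. For any real numbers A, B, C, λ, μ, τ, the linear endomorphism F of so(3) determined by F(e₁) = λe₁ + Ae₂ + Be₃, F(e₂) = Ae₁ + μe₂ + Ce₃, F(e₃) = Be₁ + Ce₂ + τe₃ is not torsion free; that is, there exist X, Y ∈ so(3) with N_F(X,Y) ≠ 0. -/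
/-!
Reading off the coordinates of `N_F(eᵢ, eⱼ)`, torsion freeness of the symmetric `F` forces
`adj F = -1`: every principal `2 × 2` minor of `F` equals `-1` and every off-diagonal cofactor
vanishes. These equations kill the off-diagonal entries, so the diagonal entries satisfy
`λμ = μτ = λτ = -1`, whence `(λμτ)² = -1`.
-/

def torsionTensor {R g : Type*} [CommRing R] [LieRing g] [LieAlgebra R g]
    (F : g →ₗ[R] g) (X Y : g) : g :=
  ⁅F X, F Y⁆ - F ⁅X, F Y⁆ - F ⁅F X, Y⁆ - ⁅X, Y⁆

theorem Module.Basis.coeffs_eq_zero_of_fin_three {R M : Type*} [Ring R] [AddCommGroup M]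
    [Module R M] (e : Module.Basis (Fin 3) R M) {a b c : R}
    (h : a • e 0 + b • e 1 + c • e 2 = 0) : a = 0 ∧ b = 0 ∧ c = 0 := by
  have hsum : ∑ i, ![a, b, c] i • e i = 0 := by
    simpa [Fin.sum_univ_three] using h
  have hli := Fintype.linearIndependent_iff.mp e.linearIndependent ![a, b, c] hsum
  exact ⟨hli 0, hli 1, hli 2⟩

theorem torsionTensor_so3_basis {R g : Type*} [CommRing R] [LieRing g] [LieAlgebra R g]
    (e : Fin 3 → g)
    (h12 : ⁅e 0, e 1⁆ = -(e 2)) (h13 : ⁅e 0, e 2⁆ = e 1) (h23 : ⁅e 1, e 2⁆ = -(e 0))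
    (A B C lam μ τ : R) (F : g →ₗ[R] g)
    (hF1 : F (e 0) = lam • e 0 + A • e 1 + B • e 2)
    (hF2 : F (e 1) = A • e 0 + μ • e 1 + C • e 2)
    (hF3 : F (e 2) = B • e 0 + C • e 1 + τ • e 2) :
    torsionTensor F (e 0) (e 1) = (2 * (B * μ - A * C)) • e 0 + (2 * (C * lam - A * B)) • e 1 +
        (1 + (μ * τ - C ^ 2) + (lam * τ - B ^ 2) - (lam * μ - A ^ 2)) • e 2 ∧
      torsionTensor F (e 0) (e 2) = (2 * (B * C - A * τ)) • e 0 +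
        (-1 - (μ * τ - C ^ 2) + (lam * τ - B ^ 2) - (lam * μ - A ^ 2)) • e 1 +
        (2 * (A * B - C * lam)) • e 2 ∧
      torsionTensor F (e 1) (e 2) =
        (1 - (μ * τ - C ^ 2) + (lam * τ - B ^ 2) + (lam * μ - A ^ 2)) • e 0 +
        (2 * (A * τ - B * C)) • e 1 + (2 * (B * μ - A * C)) • e 2 := by
  have h21 : ⁅e 1, e 0⁆ = e 2 := by rw [← lie_skew, h12, neg_neg]
  have h31 : ⁅e 2, e 0⁆ = -(e 1) := by rw [← lie_skew, h13]
  have h32 : ⁅e 2, e 1⁆ = e 0 := by rw [← lie_skew, h23, neg_neg]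
  refine ⟨?_, ?_, ?_⟩ <;>
  · simp only [torsionTensor, hF1, hF2, hF3, lie_add, add_lie, lie_smul, smul_lie, lie_self,
      h12, h13, h23, h21, h31, h32, map_add, map_smul, map_neg, smul_neg, smul_zero, add_zero,
      zero_add]
    module

theorem false_of_minors_eq_neg_one {R : Type*} [CommRing R] [LinearOrder R]
    [IsStrictOrderedRing R] (A B C lam μ τ : R)
    (hx : μ * τ - C ^ 2 = -1) (hy : lam * τ - B ^ 2 = -1) (hz : lam * μ - A ^ 2 = -1)
    (hBμ : B * μ = A * C) (hClam : C * lam = A * B) (hAτ : A * τ = B * C) : False := by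
  have hA : A = 0 := by linear_combination A * hx - μ * hAτ - C * hBμ
  have hB : B = 0 := by linear_combination B * hz - lam * hBμ - A * hClam
  have hC : C = 0 := by linear_combination C * hy - τ * hClam - B * hAτ
  subst hA hB hC
  have hsq : (lam * μ * τ) ^ 2 = -1 := by
    linear_combination (μ * τ * (lam * τ)) * hz - (lam * τ) * hx + hy
  linarith [sq_nonneg (lam * μ * τ)]

/-- No endomorphism of so(3) of the stated symmetric shape is torsion free. -/
theorem statement6 (g : Type*) [LieRing g] [LieAlgebra ℝ g]
    (e : Module.Basis (Fin 3) ℝ g)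
    (h12 : ⁅e 0, e 1⁆ = -(e 2)) (h13 : ⁅e 0, e 2⁆ = e 1) (h23 : ⁅e 1, e 2⁆ = -(e 0))
    (A B C lam μ τ : ℝ) (F : g →ₗ[ℝ] g)
    (hF1 : F (e 0) = lam • e 0 + A • e 1 + B • e 2)
    (hF2 : F (e 1) = A • e 0 + μ • e 1 + C • e 2)
    (hF3 : F (e 2) = B • e 0 + C • e 1 + τ • e 2) :
    ∃ X Y : g, ⁅F X, F Y⁆ - F ⁅X, F Y⁆ - F ⁅F X, Y⁆ - ⁅X, Y⁆ ≠ 0 := by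
  by_contra! hN
  obtain ⟨N01, N02, N12⟩ := torsionTensor_so3_basis e h12 h13 h23 A B C lam μ τ F hF1 hF2 hF3
  obtain ⟨q1, q2, q3⟩ := e.coeffs_eq_zero_of_fin_three (N01.symm.trans (hN (e 0) (e 1)))
  obtain ⟨q4, q5, -⟩ := e.coeffs_eq_zero_of_fin_three (N02.symm.trans (hN (e 0) (e 2)))
  obtain ⟨q6, -, -⟩ := e.coeffs_eq_zero_of_fin_three (N12.symm.trans (hN (e 1) (e 2)))
  exact false_of_minors_eq_neg_one A B C lam μ τ (by linarith) (by linarith) (by linarith)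
    (by linarith) (by linarith) (by linarith)
end
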